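/- arXiv:0912.1631 — 13 statements merged into one kernel-verified Lean document; each statement's English description precedes it below -/
import Mathlib

section
/- Let λ ≠ 0, and let k, m be real constants with k ≠ 0. If φ : ℝ × ℝ → ℝ is a positive differentiable solution of u_t + u^k·u_x + λ·u^m = 0 on ℝ², then for every ε ∈ ℝ the function ψ(x,t) = e^{−ε/k}·φ(e^{((k−m+1)/k)ε} x, e^{((1−m)/k)ε} t) is a positive differentiable solution of the same equation on ℝ². -/
open Real

/-- If φ is a positive differentiable solution of
`u_t + u^k·u_x + λ·u^m = 0` on ℝ² (with λ ≠ 0, k ≠ 0), then for every ε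
the function `ψ(x,t) = e^{−ε/k}·φ(e^{((k−m+1)/k)ε} x, e^{((1−m)/k)ε} t)`
is a positive differentiable solution of the same equation on ℝ². -/
theorem case1_scaling_invariance
    (lam k m : ℝ) (hlam : lam ≠ 0) (hk : k ≠ 0) (ε : ℝ)
    (φ : ℝ × ℝ → ℝ)
    (hφ : Differentiable ℝ φ)
    (hpos : ∀ x t : ℝ, 0 < φ (x, t))
    (hsol : ∀ x t : ℝ,
      fderiv ℝ φ (x, t) (0, 1) + φ (x, t) ^ k * fderiv ℝ φ (x, t) (1, 0)
        + lam * φ (x, t) ^ m = 0) :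
    ∀ ψ : ℝ × ℝ → ℝ,
      ψ = (fun p : ℝ × ℝ =>
        exp (-ε / k) * φ (exp (((k - m + 1) / k) * ε) * p.1,
                          exp (((1 - m) / k) * ε) * p.2)) →
      Differentiable ℝ ψ ∧
      (∀ x t : ℝ, 0 < ψ (x, t)) ∧
      (∀ x t : ℝ,
        fderiv ℝ ψ (x, t) (0, 1) + ψ (x, t) ^ k * fderiv ℝ ψ (x, t) (1, 0)
          + lam * ψ (x, t) ^ m = 0) := by
  intro ψ hψdef
  subst hψdef
  set a := exp (((k - m + 1) / k) * ε) with ha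
  set b := exp (((1 - m) / k) * ε) with hb
  set c := exp (-ε / k) with hc
  let L : ℝ × ℝ →L[ℝ] ℝ × ℝ :=
    (a • ContinuousLinearMap.id ℝ ℝ).prodMap (b • ContinuousLinearMap.id ℝ ℝ)
  have hL : ∀ p : ℝ × ℝ, L p = (a * p.1, b * p.2) := fun p => rfl
  have hψd : ∀ p : ℝ × ℝ,
      HasFDerivAt (fun p : ℝ × ℝ => c * φ (a * p.1, b * p.2))
        (c • ((fderiv ℝ φ (L p)).comp L)) p := by
    intro p
    have h1 : HasFDerivAt (fun q : ℝ × ℝ => φ (L q)) ((fderiv ℝ φ (L p)).comp L) p :=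
      (hφ (L p)).hasFDerivAt.comp p L.hasFDerivAt
    exact h1.const_mul c
  refine ⟨fun p => (hψd p).differentiableAt,
    fun x t => mul_pos (exp_pos _) (hpos _ _), fun x t => ?_⟩
  have hd := (hψd (x, t)).fderiv
  rw [hd]
  have e1 : L (0, 1) = b • ((0 : ℝ), (1 : ℝ)) := by
    rw [hL]; simp [Prod.smul_def]
  have e2 : L (1, 0) = a • ((1 : ℝ), (0 : ℝ)) := by
    rw [hL]; simp [Prod.smul_def]
  simp only [ContinuousLinearMap.smul_apply, ContinuousLinearMap.comp_apply, e1, e2,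
    map_smul, smul_eq_mul, hL]
  have key := hsol (a * x) (b * t)
  set A := fderiv ℝ φ (a * x, b * t) (0, 1)
  set B := fderiv ℝ φ (a * x, b * t) (1, 0)
  set u := φ (a * x, b * t) with hu
  have hupos : 0 < u := hpos _ _
  have hmk : (c * u) ^ k = c ^ k * u ^ k := Real.mul_rpow (exp_pos _).le hupos.le
  have hmm : (c * u) ^ m = c ^ m * u ^ m := Real.mul_rpow (exp_pos _).le hupos.le
  rw [hmk, hmm]
  set r := exp (-(m / k) * ε) with hr
  have h1 : c * b = r := by
    rw [hc, hb, hr, ← Real.exp_add, exp_eq_exp]; ring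
  have h2 : c ^ k * (c * a) = r := by
    rw [hc, ha, hr, ← Real.exp_mul, ← Real.exp_add, ← Real.exp_add, exp_eq_exp]; ring
  have h3 : c ^ m = r := by
    rw [hc, hr, ← Real.exp_mul, exp_eq_exp]; ring
  linear_combination A * h1 + u ^ k * B * h2 + lam * u ^ m * h3 + r * key
end

section
/- Let λ ≠ 0, m ≠ 1 be real constants, set a = λ(m−1), and fix ε ∈ ℝ. If φ : ℝ × ℝ → ℝ is a positive differentiable solution of u_t + u^{m−1}·u_x + λ·u^m = 0 on ℝ², then the function ψ(x,t) = (φ(x, t + (ε/a)e^{a x})^{1−m} − ε e^{a x})^{1/(1−m)} satisfies the same equation at every point (x,t) where φ(x, t + (ε/a)e^{a x})^{1−m} − ε e^{a x} > 0. -/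
open Real

/-! For positive solutions the substitution `v = u ^ (1 - m)` turns the equation into the
transport form `v * v_t + v_x = a * v` with `a = λ (m - 1)`. In that form the transformation is
elementary: if `s = t + (ε / a) e^{a x}`, then `V(x, t) = v(x, s) - ε e^{a x}` has `V_t = v_t` and
`V_x = v_x + ε e^{a x} v_t - a ε e^{a x}`, so `V * V_t + V_x = v * v_t + v_x - a ε e^{a x} = a * V`.
Undoing the substitution where `V > 0` gives `ψ = V ^ (1 / (1 - m))`. -/

/- A solution is recorded at a point through its value `u` (resp. `v`) and its derivative `D` there,
so that `D (0, 1)` is the `t`-derivative and `D (1, 0)` the `x`-derivative. -/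
def BurgersAt (lam m u : ℝ) (D : ℝ × ℝ →L[ℝ] ℝ) : Prop :=
  D (0, 1) + u ^ (m - 1) * D (1, 0) + lam * u ^ m = 0

def TransportAt (a v : ℝ) (D : ℝ × ℝ →L[ℝ] ℝ) : Prop :=
  v * D (0, 1) + D (1, 0) = a * v

theorem burgersAt_iff_transportAt {lam m u : ℝ} (D : ℝ × ℝ →L[ℝ] ℝ) (hu : 0 < u) (hm : m ≠ 1) :
    BurgersAt lam m u D ↔
      TransportAt (lam * (m - 1)) (u ^ (1 - m)) (((1 - m) * u ^ (-m)) • D) := by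
  set c := u ^ (1 - 2 * m)
  have hc : (1 - m) * c ≠ 0 := mul_ne_zero (sub_ne_zero.2 hm.symm) (rpow_pos_of_pos hu _).ne'
  have hv : u ^ (1 - m) = c * u ^ m := by rw [← rpow_add hu]; congr 1; ring
  have hv' : u ^ (-m) = c * u ^ (m - 1) := by rw [← rpow_add hu]; congr 1; ring
  have hvv : u ^ (1 - m) * u ^ (-m) = c := by rw [← rpow_add hu]; congr 1; ring
  have key : u ^ (1 - m) * ((1 - m) * u ^ (-m) * D (0, 1)) + (1 - m) * u ^ (-m) * D (1, 0)
      - lam * (m - 1) * u ^ (1 - m) =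
      (1 - m) * c * (D (0, 1) + u ^ (m - 1) * D (1, 0) + lam * u ^ m) := by
    linear_combination ((1 - m) * D (0, 1)) * hvv + (1 - m) * D (1, 0) * hv'
      + lam * (1 - m) * hv
  simp only [BurgersAt, TransportAt, smul_apply, smul_eq_mul]
  rw [← sub_eq_zero (a := u ^ (1 - m) * _ + _), key, mul_eq_zero, or_iff_right hc]

noncomputable def shear (a ε : ℝ) (p : ℝ × ℝ) : ℝ × ℝ :=
  (p.1, p.2 + ε / a * exp (a * p.1))

theorem hasFDerivAt_shear {a : ℝ} (ha : a ≠ 0) (ε : ℝ) (p : ℝ × ℝ) :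
    HasFDerivAt (shear a ε)
      ((ContinuousLinearMap.fst ℝ ℝ ℝ).prod
        (ContinuousLinearMap.snd ℝ ℝ ℝ + (ε * exp (a * p.1)) • ContinuousLinearMap.fst ℝ ℝ ℝ))
      p := by
  have hexp : HasDerivAt (fun y : ℝ => ε / a * exp (a * y)) (ε * exp (a * p.1)) p.1 :=
    ((((hasDerivAt_id' p.1).const_mul a).exp).const_mul (ε / a)).congr_deriv (by field_simp)
  exact hasFDerivAt_fst.prodMk (hasFDerivAt_snd.add (hexp.comp_hasFDerivAt p hasFDerivAt_fst))

theorem transportAt_shear {a ε : ℝ} (ha : a ≠ 0) {v : ℝ × ℝ → ℝ} {D : ℝ × ℝ →L[ℝ] ℝ}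
    {p : ℝ × ℝ} (hv : HasFDerivAt v D (shear a ε p)) (htr : TransportAt a (v (shear a ε p)) D) :
    ∃ D' : ℝ × ℝ →L[ℝ] ℝ,
      HasFDerivAt (fun q => v (shear a ε q) - ε * exp (a * q.1)) D' p ∧
      TransportAt a (v (shear a ε p) - ε * exp (a * p.1)) D' := by
  have hexp : HasFDerivAt (fun q : ℝ × ℝ => ε * exp (a * q.1))
      ((ε * (exp (a * p.1) * (a * 1))) • ContinuousLinearMap.fst ℝ ℝ ℝ) p :=
    ((((hasDerivAt_id' p.1).const_mul a).exp).const_mul ε).comp_hasFDerivAt p hasFDerivAt_fst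
  refine ⟨_, (hv.comp p (hasFDerivAt_shear ha ε p)).sub hexp, ?_⟩
  have hsplit : ((1 : ℝ), ε * exp (a * p.1)) = (1, 0) + (ε * exp (a * p.1)) • (0, 1) := by
    simp
  simp only [TransportAt, sub_apply, ContinuousLinearMap.comp_apply,
    ContinuousLinearMap.prod_apply, add_apply, smul_apply, ContinuousLinearMap.coe_fst',
    ContinuousLinearMap.coe_snd',
    smul_eq_mul, mul_zero, mul_one, add_zero, zero_add] at htr ⊢
  rw [hsplit, map_add, map_smul, smul_eq_mul]
  linear_combination htr

theorem burgersAt_rpow_of_transportAt {lam m : ℝ} (hm : m ≠ 1) {V : ℝ × ℝ → ℝ}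
    {D : ℝ × ℝ →L[ℝ] ℝ} {p : ℝ × ℝ} (hV : HasFDerivAt V D p) (hpos : 0 < V p)
    (htr : TransportAt (lam * (m - 1)) (V p) D) :
    ∃ D' : ℝ × ℝ →L[ℝ] ℝ,
      HasFDerivAt (fun q => V q ^ (1 / (1 - m))) D' p ∧
      BurgersAt lam m (V p ^ (1 / (1 - m))) D' := by
  refine ⟨_, hV.rpow_const (Or.inl hpos.ne'), ?_⟩
  have hm' : 1 - m ≠ 0 := sub_ne_zero.2 hm.symm
  have hu : 0 < V p ^ (1 / (1 - m)) := rpow_pos_of_pos hpos _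
  have hv : (V p ^ (1 / (1 - m))) ^ (1 - m) = V p := by
    rw [← rpow_mul hpos.le, one_div_mul_cancel hm', rpow_one]
  have hcoef : (1 - m) * (V p ^ (1 / (1 - m))) ^ (-m) * (1 / (1 - m) * V p ^ (1 / (1 - m) - 1))
      = 1 := by
    rw [← rpow_mul hpos.le, mul_mul_mul_comm, mul_one_div_cancel hm', one_mul, ← rpow_add hpos]
    convert rpow_zero (V p) using 2
    field_simp
    ring
  rw [burgersAt_iff_transportAt _ hu hm, hv, smul_smul, hcoef, one_smul]
  exact htr

/-- case k = m−1, a = λ(m−1). If φ is a positive differentiable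
solution of `u_t + u^{m−1}·u_x + λ·u^m = 0` on ℝ², then
`ψ(x,t) = (φ(x, t + (ε/a)e^{ax})^{1−m} − ε e^{ax})^{1/(1−m)}`
satisfies the same equation at every point where
`φ(x, t + (ε/a)e^{ax})^{1−m} − ε e^{ax} > 0`. -/
theorem case2_G5_transformation
    (lam m : ℝ) (hlam : lam ≠ 0) (hm : m ≠ 1) (a : ℝ) (ha : a = lam * (m - 1))
    (ε : ℝ)
    (φ : ℝ × ℝ → ℝ)
    (hφ : Differentiable ℝ φ)
    (hpos : ∀ x t : ℝ, 0 < φ (x, t))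
    (hsol : ∀ x t : ℝ,
      fderiv ℝ φ (x, t) (0, 1) + φ (x, t) ^ (m - 1) * fderiv ℝ φ (x, t) (1, 0)
        + lam * φ (x, t) ^ m = 0) :
    ∀ ψ : ℝ × ℝ → ℝ,
      ψ = (fun p : ℝ × ℝ =>
        (φ (p.1, p.2 + (ε / a) * exp (a * p.1)) ^ (1 - m)
          - ε * exp (a * p.1)) ^ (1 / (1 - m))) →
      ∀ x t : ℝ,
        0 < φ (x, t + (ε / a) * exp (a * x)) ^ (1 - m) - ε * exp (a * x) →
        DifferentiableAt ℝ ψ (x, t) ∧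
        fderiv ℝ ψ (x, t) (0, 1) + ψ (x, t) ^ (m - 1) * fderiv ℝ ψ (x, t) (1, 0)
          + lam * ψ (x, t) ^ m = 0 := by
  rintro ψ rfl x t hV
  subst ha
  set q := shear (lam * (m - 1)) ε (x, t)
  have hφq : HasFDerivAt (fun p => φ p ^ (1 - m))
      (((1 - m) * φ q ^ (-m)) • fderiv ℝ φ q) q := by
    have h := (hφ q).hasFDerivAt.rpow_const (p := 1 - m) (Or.inl (hpos q.1 q.2).ne')
    rwa [sub_sub_cancel_left] at h
  have htr := (burgersAt_iff_transportAt _ (hpos q.1 q.2) hm).1 (hsol q.1 q.2)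
  obtain ⟨DV, hDV, hVtr⟩ :=
    transportAt_shear (mul_ne_zero hlam (sub_ne_zero.2 hm)) hφq htr
  obtain ⟨Dψ, hDψ, hψ⟩ := burgersAt_rpow_of_transportAt hm hDV hV hVtr
  unfold shear at hDψ
  exact ⟨hDψ.differentiableAt, by rw [hDψ.fderiv]; exact hψ⟩
end

section
/- Let λ ≠ 0, m ≠ 1 be real constants and fix ε ∈ ℝ. If φ : ℝ × ℝ → ℝ is a positive differentiable solution of u_t + u^{m−1}·u_x + λ·u^m = 0 on ℝ², then the function ψ(x,t) = e^{−ε/(m−1)}·φ(x, e^{−ε} t) is a positive differentiable solution of the same equation on ℝ². -/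
open Real

/-- case k = m−1. If φ is a positive differentiable solution of
`u_t + u^{m−1}·u_x + λ·u^m = 0` on ℝ², then
`ψ(x,t) = e^{−ε/(m−1)}·φ(x, e^{−ε} t)` is a positive differentiable solution
of the same equation on ℝ². -/
theorem case2_G6_transformation
    (lam m : ℝ) (hlam : lam ≠ 0) (hm : m ≠ 1) (ε : ℝ)
    (φ : ℝ × ℝ → ℝ)
    (hφ : Differentiable ℝ φ)
    (hpos : ∀ x t : ℝ, 0 < φ (x, t))
    (hsol : ∀ x t : ℝ,
      fderiv ℝ φ (x, t) (0, 1) + φ (x, t) ^ (m - 1) * fderiv ℝ φ (x, t) (1, 0)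
        + lam * φ (x, t) ^ m = 0) :
    ∀ ψ : ℝ × ℝ → ℝ,
      ψ = (fun p : ℝ × ℝ => exp (-ε / (m - 1)) * φ (p.1, exp (-ε) * p.2)) →
      Differentiable ℝ ψ ∧
      (∀ x t : ℝ, 0 < ψ (x, t)) ∧
      (∀ x t : ℝ,
        fderiv ℝ ψ (x, t) (0, 1) + ψ (x, t) ^ (m - 1) * fderiv ℝ ψ (x, t) (1, 0)
          + lam * ψ (x, t) ^ m = 0) := by
  intro ψ hψ
  have hm1 : m - 1 ≠ 0 := sub_ne_zero.mpr hm
  set a := exp (-ε) with ha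
  set c := exp (-ε / (m - 1)) with hc
  have hapos : (0:ℝ) < a := exp_pos _
  have hcpos : (0:ℝ) < c := exp_pos _
  set L : ℝ × ℝ →L[ℝ] ℝ × ℝ :=
    (ContinuousLinearMap.fst ℝ ℝ ℝ).prod (a • ContinuousLinearMap.snd ℝ ℝ ℝ) with hL
  have hLapp : ∀ p : ℝ × ℝ, L p = (p.1, a * p.2) := fun p => rfl
  have hψ' : ψ = fun p => c * φ (L p) := by
    rw [hψ]; rfl
  have hD : ∀ p : ℝ × ℝ, HasFDerivAt ψ (c • ((fderiv ℝ φ (L p)).comp L)) p := by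
    intro p
    rw [hψ']
    exact ((hφ (L p)).hasFDerivAt.comp p L.hasFDerivAt).const_mul c
  have hdiff : Differentiable ℝ ψ := fun p => (hD p).differentiableAt
  have hca : c ^ (m - 1) = a := by
    rw [hc, ha, ← exp_mul]
    congr 1
    field_simp
  have hcm : c ^ m = a * c := by
    have : c ^ (m - 1 + 1) = c ^ (m - 1) * c := Real.rpow_add_one hcpos.ne' _
    rw [show m = m - 1 + 1 by ring, this, hca]
  refine ⟨hdiff, fun x t => by rw [hψ']; exact mul_pos hcpos (hpos _ _), fun x t => ?_⟩
  have hf := (hD (x, t)).fderiv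
  have hψv : ψ (x, t) = c * φ (x, a * t) := by rw [hψ']; rfl
  rw [hf, hψv]
  simp only [ContinuousLinearMap.coe_smul', Pi.smul_apply, ContinuousLinearMap.coe_comp',
    Function.comp_apply, smul_eq_mul]
  have hL1 : L (0, 1) = (0, a) := by simp [hLapp]
  have hL2 : L (1, 0) = (1, 0) := by simp [hLapp]
  have hLp : L (x, t) = (x, a * t) := hLapp _
  rw [hL1, hL2, hLp]
  have hsmul : fderiv ℝ φ (x, a * t) (0, a) = a * fderiv ℝ φ (x, a * t) (0, 1) := by
    have : ((0 : ℝ), a) = a • ((0 : ℝ), (1 : ℝ)) := by simp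
    rw [this, map_smul, smul_eq_mul]
  rw [hsmul]
  have hmr : (c * φ (x, a * t)) ^ (m - 1) = c ^ (m - 1) * φ (x, a * t) ^ (m - 1) :=
    Real.mul_rpow hcpos.le (hpos _ _).le
  have hmr' : (c * φ (x, a * t)) ^ m = c ^ m * φ (x, a * t) ^ m :=
    Real.mul_rpow hcpos.le (hpos _ _).le
  rw [hmr, hmr', hca, hcm]
  linear_combination a * c * hsol x (a * t)
end

section
/- Let λ ≠ 0, m ≠ 1 be real constants, set a = λ(m−1), and fix ε ∈ ℝ. If φ : ℝ × ℝ → ℝ is a positive differentiable solution of u_t + u^{m−1}·u_x + λ·u^m = 0 on ℝ², then the function ψ(x,t) = e^{−λ x}·(e^{a x} − ε)^{1/(m−1)}·φ((1/a)·ln(e^{a x} − ε), t) satisfies the same equation at every point (x,t) with e^{a x} > ε. -/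
open Real

/-!
Write `ψ(x,t) = A(x) φ(Y(x), t)`. By the chain rule the residual of the equation at `ψ` and
`(x, t)` is `A(x)` times the residual at `φ` and `(Y(x), t)` as soon as `A^{m-1} Y' = 1` and
`A^{m-1} (A' + λA) = λA`. For `u = e^{ax} - ε`, `A = e^{-λx} u^{1/(m-1)}` and `Y = a⁻¹ log u`
one has `A^{m-1} = e^{-ax} u`, `Y' = e^{ax} / u` and `A' = λ ε A / u` (because `a/(m-1) = λ`),
and both conditions follow.
-/

noncomputable def dampedBurgersResidual (lam m : ℝ) (φ : ℝ × ℝ → ℝ) (p : ℝ × ℝ) : ℝ :=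
  fderiv ℝ φ p (0, 1) + φ p ^ (m - 1) * fderiv ℝ φ p (1, 0) + lam * φ p ^ m

theorem rpow_sub_one_mul_self {z : ℝ} (hz : z ≠ 0) (m : ℝ) : z ^ (m - 1) * z = z ^ m := by
  rw [← rpow_add_one hz, sub_add_cancel]

section Transformation

variable {A Y : ℝ → ℝ} {A' Y' x t : ℝ} {φ : ℝ × ℝ → ℝ}

theorem hasFDerivAt_mul_comp_fst {D : ℝ × ℝ →L[ℝ] ℝ} (hA : HasDerivAt A A' x)
    (hY : HasDerivAt Y Y' x) (hφ : HasFDerivAt φ D (Y x, t)) :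
    HasFDerivAt (fun p : ℝ × ℝ => A p.1 * φ (Y p.1, p.2))
      (A x • D.comp ((((1 : ℝ →L[ℝ] ℝ).smulRight Y').comp (.fst ℝ ℝ ℝ)).prod (.snd ℝ ℝ ℝ))
        + φ (Y x, t) • ((1 : ℝ →L[ℝ] ℝ).smulRight A').comp (.fst ℝ ℝ ℝ)) (x, t) := by
  have hYt : HasFDerivAt (fun p : ℝ × ℝ => (Y p.1, p.2))
      ((((1 : ℝ →L[ℝ] ℝ).smulRight Y').comp (.fst ℝ ℝ ℝ)).prod (.snd ℝ ℝ ℝ)) (x, t) :=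
    (hY.hasFDerivAt.comp (x, t) hasFDerivAt_fst).prodMk hasFDerivAt_snd
  exact (hA.hasFDerivAt.comp (x, t) hasFDerivAt_fst).mul (hφ.comp (x, t) hYt)

theorem dampedBurgersResidual_mul_comp_fst {lam m : ℝ} (hA : HasDerivAt A A' x)
    (hY : HasDerivAt Y Y' x) (hφ : DifferentiableAt ℝ φ (Y x, t)) (hA_pos : 0 < A x)
    (hφ_pos : 0 < φ (Y x, t)) (hY' : A x ^ (m - 1) * Y' = 1)
    (hA' : A x ^ (m - 1) * (A' + lam * A x) = lam * A x) :
    dampedBurgersResidual lam m (fun p : ℝ × ℝ => A p.1 * φ (Y p.1, p.2)) (x, t) =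
      A x * dampedBurgersResidual lam m φ (Y x, t) := by
  have hD : fderiv ℝ φ (Y x, t) (Y', 0) = Y' * fderiv ℝ φ (Y x, t) (1, 0) := by
    simpa using (fderiv ℝ φ (Y x, t)).map_smul Y' (1, 0)
  have hA_pow := rpow_sub_one_mul_self hA_pos.ne' m
  have hφ_pow := rpow_sub_one_mul_self hφ_pos.ne' m
  simp only [dampedBurgersResidual, (hasFDerivAt_mul_comp_fst hA hY hφ.hasFDerivAt).fderiv,
    add_apply, smul_apply, ContinuousLinearMap.comp_apply, ContinuousLinearMap.prod_apply,
    ContinuousLinearMap.coe_fst', ContinuousLinearMap.coe_snd',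
    ContinuousLinearMap.smulRight_apply, one_apply_eq_self, smul_eq_mul, zero_mul, mul_zero, one_mul, add_zero, mul_rpow hA_pos.le hφ_pos.le, hD]
  linear_combination (A x * φ (Y x, t) ^ (m - 1) * fderiv ℝ φ (Y x, t) (1, 0)) * hY'
    + φ (Y x, t) ^ m * hA' + A x ^ (m - 1) * A' * hφ_pow - lam * φ (Y x, t) ^ m * hA_pow

end Transformation

theorem hasDerivAt_exp_const_mul (c x : ℝ) :
    HasDerivAt (fun s => exp (c * s)) (exp (c * x) * c) x := by
  simpa [mul_comm] using ((hasDerivAt_id x).const_mul c).exp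

section Gauge

variable {lam m a ε x : ℝ}

theorem hasDerivAt_log_exp_sub_div (ha : a ≠ 0) (hx : ε < exp (a * x)) :
    HasDerivAt (fun s => 1 / a * log (exp (a * s) - ε)) (exp (a * x) / (exp (a * x) - ε)) x := by
  refine ((((hasDerivAt_exp_const_mul a x).sub_const ε).log (sub_pos.mpr hx).ne').const_mul
    (1 / a)).congr_deriv ?_
  field_simp

theorem hasDerivAt_exp_mul_rpow (ha : a = lam * (m - 1)) (hm : m ≠ 1) (hx : ε < exp (a * x)) :
    HasDerivAt (fun s => exp (-lam * s) * (exp (a * s) - ε) ^ (1 / (m - 1)))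
      (lam * ε / (exp (a * x) - ε) * (exp (-lam * x) * (exp (a * x) - ε) ^ (1 / (m - 1)))) x := by
  have hu_pos : 0 < exp (a * x) - ε := sub_pos.mpr hx
  have hac : a * (1 / (m - 1)) = lam := by
    rw [ha]
    field_simp [sub_ne_zero.mpr hm]
  refine ((hasDerivAt_exp_const_mul (-lam) x).mul
    (((hasDerivAt_exp_const_mul a x).sub_const ε).rpow_const (p := 1 / (m - 1))
      (Or.inl hu_pos.ne'))).congr_deriv ?_
  rw [rpow_sub hu_pos, rpow_one, ← hac]
  field_simp
  ring

theorem exp_mul_rpow_rpow_sub_one (ha : a = lam * (m - 1)) (hm : m ≠ 1) (hx : ε < exp (a * x)) :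
    (exp (-lam * x) * (exp (a * x) - ε) ^ (1 / (m - 1))) ^ (m - 1) =
      (exp (a * x))⁻¹ * (exp (a * x) - ε) := by
  have hu_pos : 0 < exp (a * x) - ε := sub_pos.mpr hx
  rw [mul_rpow (exp_pos _).le (rpow_nonneg hu_pos.le _), ← exp_mul, ← rpow_mul hu_pos.le,
    one_div_mul_cancel (sub_ne_zero.mpr hm), rpow_one, ← exp_neg, ha]
  ring_nf

end Gauge

/-- case k = m−1, a = λ(m−1). If φ is a positive differentiable
solution of `u_t + u^{m−1}·u_x + λ·u^m = 0` on ℝ², then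
`ψ(x,t) = e^{−λx}·(e^{ax} − ε)^{1/(m−1)}·φ((1/a)·ln(e^{ax} − ε), t)`
satisfies the same equation at every point with `e^{ax} > ε`. -/
theorem case2_G7_transformation
    (lam m : ℝ) (hlam : lam ≠ 0) (hm : m ≠ 1) (a : ℝ) (ha : a = lam * (m - 1))
    (ε : ℝ)
    (φ : ℝ × ℝ → ℝ)
    (hφ : Differentiable ℝ φ)
    (hpos : ∀ x t : ℝ, 0 < φ (x, t))
    (hsol : ∀ x t : ℝ,
      fderiv ℝ φ (x, t) (0, 1) + φ (x, t) ^ (m - 1) * fderiv ℝ φ (x, t) (1, 0)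
        + lam * φ (x, t) ^ m = 0) :
    ∀ ψ : ℝ × ℝ → ℝ,
      ψ = (fun p : ℝ × ℝ =>
        exp (-lam * p.1) * (exp (a * p.1) - ε) ^ (1 / (m - 1)) *
          φ ((1 / a) * Real.log (exp (a * p.1) - ε), p.2)) →
      ∀ x t : ℝ,
        ε < exp (a * x) →
        DifferentiableAt ℝ ψ (x, t) ∧
        fderiv ℝ ψ (x, t) (0, 1) + ψ (x, t) ^ (m - 1) * fderiv ℝ ψ (x, t) (1, 0)
          + lam * ψ (x, t) ^ m = 0 := by
  rintro ψ rfl x t hx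
  have ha0 : a ≠ 0 := ha ▸ mul_ne_zero hlam (sub_ne_zero.mpr hm)
  have hA := hasDerivAt_exp_mul_rpow ha hm hx
  have hY := hasDerivAt_log_exp_sub_div ha0 hx
  have hA_pow := exp_mul_rpow_rpow_sub_one ha hm hx
  have hu_pos : 0 < exp (a * x) - ε := sub_pos.mpr hx
  refine ⟨(hasFDerivAt_mul_comp_fst hA hY (hφ (_, t)).hasFDerivAt).differentiableAt, ?_⟩
  have key := dampedBurgersResidual_mul_comp_fst (lam := lam) (m := m) hA hY (hφ (_, t))
    (by positivity) (hpos _ _) (by rw [hA_pow]; field_simp) (by rw [hA_pow]; field_simp; ring)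
  simpa only [dampedBurgersResidual, hsol, mul_zero] using key
end

section
/- Let λ ≠ 0, m ≠ 1 be real constants, set a = λ(1−m), and fix ε ∈ ℝ. If φ : ℝ × ℝ → ℝ is a positive differentiable solution of u_t + u^{1−m}·u_x + λ·u^m = 0 on ℝ², then the function ψ(x,t) = (φ((x + (a/2)t²(1−e^{ε}))e^{ε}, t e^{ε})^{1−m} − a t(1−e^{ε}))^{1/(1−m)} satisfies the same equation at every point (x,t) where the quantity φ((x + (a/2)t²(1−e^{ε}))e^{ε}, t e^{ε})^{1−m} − a t(1−e^{ε}) is positive. -/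
/-!
Write `s = 1 - m`. The substitution `w = u ^ s` turns `u_t + u^s u_x + λ u^m = 0` into the
forced Burgers equation `w_t + w w_x + λ s = 0`, and `ψ = W ^ (1 / s)` turns it back. The forced
Burgers equation with `a = λ s` is invariant under
`W(x, t) = w((x + (a/2) t² (1 - c)) c, t c) - a t (1 - c)` for every `c`.
-/

open Real

/-- The left-hand side of `u_t + u^k u_x + λ u^n = 0` at `p = (x, t)`. -/
noncomputable def burgersResidual (k lam n : ℝ) (u : ℝ × ℝ → ℝ) (p : ℝ × ℝ) : ℝ :=
  fderiv ℝ u p (0, 1) + u p ^ k * fderiv ℝ u p (1, 0) + lam * u p ^ n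

theorem burgersResidual_rpow {k lam n k' n' r : ℝ} {u : ℝ × ℝ → ℝ} {p : ℝ × ℝ}
    (hu : DifferentiableAt ℝ u p) (hpos : 0 < u p)
    (hk : r * k' = k) (hn : r * n' = n + r - 1) :
    burgersResidual k' (lam * r) n' (fun q => u q ^ r) p
      = r * u p ^ (r - 1) * burgersResidual k lam n u p := by
  rw [burgersResidual, burgersResidual, (hu.hasFDerivAt.rpow_const (Or.inl hpos.ne')).fderiv]
  simp only [smul_apply, smul_eq_mul]
  rw [← rpow_mul hpos.le, ← rpow_mul hpos.le, hk, hn, add_sub_assoc, rpow_add hpos]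
  ring

theorem ContinuousLinearMap.apply_prod_eq (D : ℝ × ℝ →L[ℝ] ℝ) (u v : ℝ) :
    D (u, v) = u * D (1, 0) + v * D (0, 1) := by
  rw [← smul_eq_mul, ← smul_eq_mul, ← map_smul, ← map_smul, ← map_add]
  simp

theorem burgersResidual_galilean {a c : ℝ} {w : ℝ × ℝ → ℝ} {x t : ℝ}
    (hw : DifferentiableAt ℝ w ((x + a / 2 * t ^ 2 * (1 - c)) * c, t * c)) :
    burgersResidual 1 a 0
        (fun q => w ((q.1 + a / 2 * q.2 ^ 2 * (1 - c)) * c, q.2 * c) - a * q.2 * (1 - c)) (x, t)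
      = c * burgersResidual 1 a 0 w ((x + a / 2 * t ^ 2 * (1 - c)) * c, t * c) := by
  have hfst := hasFDerivAt_fst (𝕜 := ℝ) (E := ℝ) (F := ℝ) (p := (x, t))
  have hsnd := hasFDerivAt_snd (𝕜 := ℝ) (E := ℝ) (F := ℝ) (p := (x, t))
  have hshift := ((hfst.add ((((hasDerivAt_pow 2 t).comp_hasFDerivAt (x, t) hsnd).const_mul
    (a / 2)).mul_const (1 - c))).mul_const c).prodMk (hsnd.mul_const c)
  have hW : HasFDerivAt
      (fun q => w ((q.1 + a / 2 * q.2 ^ 2 * (1 - c)) * c, q.2 * c) - a * q.2 * (1 - c)) _ (x, t) :=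
    (hw.hasFDerivAt.comp (x, t) hshift).sub ((hsnd.const_mul a).mul_const (1 - c))
  rw [burgersResidual, burgersResidual, hW.fderiv]
  simp only [sub_apply, ContinuousLinearMap.comp_apply, ContinuousLinearMap.prod_apply,
    add_apply, smul_apply, ContinuousLinearMap.coe_fst', ContinuousLinearMap.coe_snd',
    smul_eq_mul, rpow_one, rpow_zero]
  rw [ContinuousLinearMap.apply_prod_eq _ (c * (0 + _)),
    ContinuousLinearMap.apply_prod_eq _ (c * (1 + _))]
  ring

theorem case3_G8_transformation_general
    (lam m : ℝ) (hm : m ≠ 1) (a : ℝ) (ha : a = lam * (1 - m))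
    (ε : ℝ)
    (φ : ℝ × ℝ → ℝ)
    (hφ : Differentiable ℝ φ)
    (hpos : ∀ x t : ℝ, 0 < φ (x, t))
    (hsol : ∀ x t : ℝ,
      fderiv ℝ φ (x, t) (0, 1) + φ (x, t) ^ (1 - m) * fderiv ℝ φ (x, t) (1, 0)
        + lam * φ (x, t) ^ m = 0) :
    ∀ ψ : ℝ × ℝ → ℝ,
      ψ = (fun p : ℝ × ℝ =>
        (φ ((p.1 + (a / 2) * p.2 ^ 2 * (1 - exp ε)) * exp ε, p.2 * exp ε) ^ (1 - m)
          - a * p.2 * (1 - exp ε)) ^ (1 / (1 - m))) →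
      ∀ x t : ℝ,
        0 < φ ((x + (a / 2) * t ^ 2 * (1 - exp ε)) * exp ε, t * exp ε) ^ (1 - m)
              - a * t * (1 - exp ε) →
        DifferentiableAt ℝ ψ (x, t) ∧
        fderiv ℝ ψ (x, t) (0, 1) + ψ (x, t) ^ (1 - m) * fderiv ℝ ψ (x, t) (1, 0)
          + lam * ψ (x, t) ^ m = 0 := by
  intro ψ hψ x t hW_pos
  have h1m : 1 - m ≠ 0 := sub_ne_zero.mpr hm.symm
  set c := exp ε
  set w : ℝ × ℝ → ℝ := fun q => φ q ^ (1 - m)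
  have hw : Differentiable ℝ w := fun q => (hφ q).rpow_const (Or.inl (hpos q.1 q.2).ne')
  have hw_sol (q : ℝ × ℝ) : burgersResidual 1 a 0 w q = 0 := by
    rw [ha, burgersResidual_rpow (k := 1 - m) (n := m) (hφ q) (hpos q.1 q.2) (by ring) (by ring)]
    exact mul_eq_zero_of_right _ (hsol q.1 q.2)
  set W : ℝ × ℝ → ℝ :=
    fun q => w ((q.1 + a / 2 * q.2 ^ 2 * (1 - c)) * c, q.2 * c) - a * q.2 * (1 - c)
  have hW : DifferentiableAt ℝ W (x, t) := by fun_prop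
  have hW_sol : burgersResidual 1 a 0 W (x, t) = 0 := by
    rw [burgersResidual_galilean (hw _), hw_sol, mul_zero]
  have hlam : lam = a * (1 / (1 - m)) := by rw [ha]; field_simp
  subst hψ
  refine ⟨hW.rpow_const (Or.inl hW_pos.ne'), ?_⟩
  change burgersResidual (1 - m) lam m (fun q => W q ^ (1 / (1 - m))) (x, t) = 0
  rw [hlam, burgersResidual_rpow (k := 1) (n := 0) hW hW_pos (by field_simp) (by field_simp; ring),
    hW_sol, mul_zero]

/-- case k = 1−m, a = λ(1−m). If φ is a positive differentiable
solution of `u_t + u^{1−m}·u_x + λ·u^m = 0` on ℝ², then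
`ψ(x,t) = (φ((x + (a/2)t²(1−e^ε))e^ε, t e^ε)^{1−m} − a t (1−e^ε))^{1/(1−m)}`
satisfies the same equation at every point where
`φ((x + (a/2)t²(1−e^ε))e^ε, t e^ε)^{1−m} − a t (1−e^ε) > 0`. -/
theorem case3_G8_transformation
    (lam m : ℝ) (hlam : lam ≠ 0) (hm : m ≠ 1) (a : ℝ) (ha : a = lam * (1 - m))
    (ε : ℝ)
    (φ : ℝ × ℝ → ℝ)
    (hφ : Differentiable ℝ φ)
    (hpos : ∀ x t : ℝ, 0 < φ (x, t))
    (hsol : ∀ x t : ℝ,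
      fderiv ℝ φ (x, t) (0, 1) + φ (x, t) ^ (1 - m) * fderiv ℝ φ (x, t) (1, 0)
        + lam * φ (x, t) ^ m = 0) :
    ∀ ψ : ℝ × ℝ → ℝ,
      ψ = (fun p : ℝ × ℝ =>
        (φ ((p.1 + (a / 2) * p.2 ^ 2 * (1 - exp ε)) * exp ε, p.2 * exp ε) ^ (1 - m)
          - a * p.2 * (1 - exp ε)) ^ (1 / (1 - m))) →
      ∀ x t : ℝ,
        0 < φ ((x + (a / 2) * t ^ 2 * (1 - exp ε)) * exp ε, t * exp ε) ^ (1 - m)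
              - a * t * (1 - exp ε) →
        DifferentiableAt ℝ ψ (x, t) ∧
        fderiv ℝ ψ (x, t) (0, 1) + ψ (x, t) ^ (1 - m) * fderiv ℝ ψ (x, t) (1, 0)
          + lam * ψ (x, t) ^ m = 0 :=
  case3_G8_transformation_general lam m hm a ha ε φ hφ hpos hsol
end

section
/- Let λ ≠ 0, k ≠ 0 be real constants and fix ε ∈ ℝ. If φ : ℝ × ℝ → ℝ is a positive differentiable solution of u_t + u^k·u_x + λ·u = 0 on ℝ², then the function ψ(x,t) = (φ(x − (ε/(λk))e^{−λ k t}, t)^k − ε e^{−λ k t})^{1/k} satisfies the same equation at every point (x,t) where φ(x − (ε/(λk))e^{−λ k t}, t)^k − ε e^{−λ k t} > 0. -/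
/-!
For positive `u`, the substitution `w = u ^ k` turns `u_t + u^k u_x + λ u = 0` into the damped
Burgers equation `w_t + w w_x + λ k w = 0`. For `μ ≠ 0` the equation `w_t + w w_x + μ w = 0` is
invariant under `w(x, t) ↦ w(x - (ε/μ) e^{-μt}, t) - ε e^{-μt}`, and `ψ = w ^ (1/k)` undoes the
substitution wherever the transformed `w` is positive.
-/

open Real

/-- `v_t + a v_x + μ v` at a point where `v` has value `v` and derivative `L`. -/
def transportResidual (L : ℝ × ℝ →L[ℝ] ℝ) (a μ v : ℝ) : ℝ :=
  L (0, 1) + a * L (1, 0) + μ * v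

noncomputable def dampedBurgersShift (μ ε : ℝ) (w : ℝ × ℝ → ℝ) (q : ℝ × ℝ) : ℝ :=
  w (q.1 - ε / μ * exp (-(μ * q.2)), q.2) - ε * exp (-(μ * q.2))

theorem transportResidual_rpow {u : ℝ × ℝ → ℝ} {p : ℝ × ℝ} (hu : DifferentiableAt ℝ u p)
    (hpos : 0 < u p) (r a μ : ℝ) :
    DifferentiableAt ℝ (fun q => u q ^ r) p ∧
      transportResidual (fderiv ℝ (fun q => u q ^ r) p) a (μ * r) (u p ^ r) =
        r * u p ^ (r - 1) * transportResidual (fderiv ℝ u p) a μ (u p) := by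
  have hd := hu.hasFDerivAt.rpow_const (p := r) (Or.inl hpos.ne')
  refine ⟨hd.differentiableAt, ?_⟩
  have hpow : u p ^ r = u p ^ (r - 1) * u p := by
    rw [← rpow_add_one hpos.ne']; ring_nf
  simp only [transportResidual, hd.fderiv, smul_apply, smul_eq_mul, hpow]
  ring

theorem hasFDerivAt_exp_neg_mul_snd (μ : ℝ) (p : ℝ × ℝ) :
    HasFDerivAt (fun q : ℝ × ℝ => exp (-(μ * q.2)))
      ((-μ * exp (-(μ * p.2))) • ContinuousLinearMap.snd ℝ ℝ ℝ) p := by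
  have h : HasDerivAt (fun s : ℝ => exp (-(μ * s))) (-μ * exp (-(μ * p.2))) p.2 := by
    simpa [mul_comm] using (((hasDerivAt_id p.2).const_mul μ).neg).exp
  exact h.comp_hasFDerivAt p (hasFDerivAt_snd (𝕜 := ℝ))

theorem transportResidual_dampedBurgersShift {w : ℝ × ℝ → ℝ} {μ : ℝ} (hμ : μ ≠ 0) (ε x t : ℝ)
    (hw : DifferentiableAt ℝ w (x - ε / μ * exp (-(μ * t)), t)) :
    DifferentiableAt ℝ (dampedBurgersShift μ ε w) (x, t) ∧
      transportResidual (fderiv ℝ (dampedBurgersShift μ ε w) (x, t))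
          (dampedBurgersShift μ ε w (x, t)) μ (dampedBurgersShift μ ε w (x, t)) =
        transportResidual (fderiv ℝ w (x - ε / μ * exp (-(μ * t)), t))
          (w (x - ε / μ * exp (-(μ * t)), t)) μ (w (x - ε / μ * exp (-(μ * t)), t)) := by
  set e := exp (-(μ * t))
  set W := fderiv ℝ w (x - ε / μ * e, t)
  have he := hasFDerivAt_exp_neg_mul_snd μ (x, t)
  have hframe := (hasFDerivAt_fst.sub (he.const_mul (ε / μ))).prodMk (hasFDerivAt_snd (p := (x, t)))
  have hd : HasFDerivAt (dampedBurgersShift μ ε w) _ (x, t) :=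
    (hw.hasFDerivAt.comp (x, t) hframe).sub (he.const_mul ε)
  refine ⟨hd.differentiableAt, ?_⟩
  have hW : W (ε * e, 1) = ε * e * W (1, 0) + W (0, 1) := by
    rw [show ((ε * e, 1) : ℝ × ℝ) = (ε * e) • ((1 : ℝ), (0 : ℝ)) + (0, 1) by simp,
      map_add, map_smul, smul_eq_mul]
  have hx : fderiv ℝ (dampedBurgersShift μ ε w) (x, t) (1, 0) = W (1, 0) := by
    simp [hd.fderiv, W]
  -- `ε / μ * μ = ε`: the drift speed `ε e` of the moving frame matches the subtracted term.
  have ht : fderiv ℝ (dampedBurgersShift μ ε w) (x, t) (0, 1) =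
      W (0, 1) + ε * e * W (1, 0) + μ * (ε * e) := by
    simp only [hd.fderiv, sub_apply, ContinuousLinearMap.comp_apply,
      ContinuousLinearMap.prod_apply, smul_apply, ContinuousLinearMap.coe_fst',
      ContinuousLinearMap.coe_snd', smul_eq_mul]
    change W (0 - ε / μ * (-μ * e * 1), 1) - ε * (-μ * e * 1) = _
    rw [show 0 - ε / μ * (-μ * e * 1) = ε * e by field_simp; ring, hW]
    ring
  rw [transportResidual, transportResidual, hx, ht]
  simp only [dampedBurgersShift, e]
  ring

/-- case m = 1. If φ is a positive differentiable solution of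
`u_t + u^k·u_x + λ·u = 0` on ℝ², then
`ψ(x,t) = (φ(x − (ε/(λk))e^{−λkt}, t)^k − ε e^{−λkt})^{1/k}` satisfies the
same equation at every point where `φ(x − (ε/(λk))e^{−λkt}, t)^k − ε e^{−λkt} > 0`. -/
theorem case7_G5_transformation
    (lam k : ℝ) (hlam : lam ≠ 0) (hk : k ≠ 0) (ε : ℝ)
    (φ : ℝ × ℝ → ℝ)
    (hφ : Differentiable ℝ φ)
    (hpos : ∀ x t : ℝ, 0 < φ (x, t))
    (hsol : ∀ x t : ℝ,
      fderiv ℝ φ (x, t) (0, 1) + φ (x, t) ^ k * fderiv ℝ φ (x, t) (1, 0)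
        + lam * φ (x, t) = 0) :
    ∀ ψ : ℝ × ℝ → ℝ,
      ψ = (fun p : ℝ × ℝ =>
        (φ (p.1 - (ε / (lam * k)) * exp (-(lam * k * p.2)), p.2) ^ k
          - ε * exp (-(lam * k * p.2))) ^ (1 / k)) →
      ∀ x t : ℝ,
        0 < φ (x - (ε / (lam * k)) * exp (-(lam * k * t)), t) ^ k
              - ε * exp (-(lam * k * t)) →
        DifferentiableAt ℝ ψ (x, t) ∧
        fderiv ℝ ψ (x, t) (0, 1) + ψ (x, t) ^ k * fderiv ℝ ψ (x, t) (1, 0)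
          + lam * ψ (x, t) = 0 := by
  rintro ψ rfl x t hpos'
  have hburgers : ∀ q : ℝ × ℝ, DifferentiableAt ℝ (fun q => φ q ^ k) q ∧
      transportResidual (fderiv ℝ (fun q => φ q ^ k) q) (φ q ^ k) (lam * k) (φ q ^ k) = 0 := by
    rintro ⟨y, s⟩
    obtain ⟨hd, hres⟩ := transportResidual_rpow (hφ (y, s)) (hpos y s) k (φ (y, s) ^ k) lam
    exact ⟨hd, by rw [hres, transportResidual, hsol, mul_zero]⟩
  obtain ⟨hd', hres'⟩ :=
    transportResidual_dampedBurgersShift (mul_ne_zero hlam hk) ε x t (hburgers _).1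
  set w' := dampedBurgersShift (lam * k) ε (fun q => φ q ^ k)
  have hw'pos : 0 < w' (x, t) := hpos'
  have hψk : (w' (x, t) ^ (1 / k)) ^ k = w' (x, t) := by
    rw [one_div, rpow_inv_rpow hw'pos.le hk]
  have hw' : transportResidual (fderiv ℝ w' (x, t)) ((w' (x, t) ^ (1 / k)) ^ k) (lam * k)
      (w' (x, t)) = 0 := by
    rw [hψk, hres', (hburgers _).2]
  obtain ⟨hd, hres⟩ := transportResidual_rpow hd' hw'pos (1 / k) _ (lam * k)
  rw [hw', mul_zero, ← mul_mul_div lam hk] at hres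
  exact ⟨hd, hres⟩
end

section
/- Let λ ≠ 0, k ≠ 0 be real constants and fix ε ∈ ℝ. If φ : ℝ × ℝ → ℝ is a positive differentiable solution of u_t + u^k·u_x + λ·u = 0 on ℝ², then the function ψ(x,t) = (1 − ε e^{λ k t})^{−1/k}·φ(x, −(1/(λk))·ln(e^{−λ k t} − ε)) satisfies the same equation at every point (x,t) with e^{−λ k t} > ε (note that then 1 − ε e^{λ k t} = e^{λ k t}(e^{−λ k t} − ε) > 0). -/
open Real

/-!
With `c(t) = 1 - ε e^{λkt}`, the map `ψ(x, t) = A(t) φ(x, T(t))` has `T' = c⁻¹` and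
`A = c^{-1/k}`, so that `A^k = T'` and `A' = λ A (T' - 1)`. For any such amplitude `A` and time
change `T`, the chain rule gives
`ψ_t + ψ^k ψ_x + λψ = A T' (φ_t + φ^k φ_x) + (A' + λA) φ = A T' (φ_t + φ^k φ_x + λφ)`.
-/

section TimeChange

variable {φ : ℝ × ℝ → ℝ} {A T : ℝ → ℝ} {A' T' x t : ℝ}

theorem hasFDerivAt_mul_comp_timeChange
    (hφ : DifferentiableAt ℝ φ (x, T t)) (hA : HasDerivAt A A' t) (hT : HasDerivAt T T' t) :
    HasFDerivAt (fun p : ℝ × ℝ => A p.2 * φ (p.1, T p.2))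
      (A t • (fderiv ℝ φ (x, T t)).comp
          ((ContinuousLinearMap.fst ℝ ℝ ℝ).prod (T' • ContinuousLinearMap.snd ℝ ℝ ℝ)) +
        φ (x, T t) • A' • ContinuousLinearMap.snd ℝ ℝ ℝ) (x, t) := by
  have hsnd : HasFDerivAt (fun p : ℝ × ℝ => p.2) (ContinuousLinearMap.snd ℝ ℝ ℝ) (x, t) :=
    hasFDerivAt_snd
  have hcurve : HasFDerivAt (fun p : ℝ × ℝ => (p.1, T p.2))
      ((ContinuousLinearMap.fst ℝ ℝ ℝ).prod (T' • ContinuousLinearMap.snd ℝ ℝ ℝ)) (x, t) :=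
    hasFDerivAt_fst.prodMk (hT.comp_hasFDerivAt (x, t) hsnd)
  exact (hA.comp_hasFDerivAt (x, t) hsnd).mul (hφ.hasFDerivAt.comp (x, t) hcurve)

theorem dampedBurgers_mul_comp_timeChange {k lam : ℝ}
    (hφ : DifferentiableAt ℝ φ (x, T t)) (hφ_nonneg : 0 ≤ φ (x, T t))
    (hsol : fderiv ℝ φ (x, T t) (0, 1) + φ (x, T t) ^ k * fderiv ℝ φ (x, T t) (1, 0)
        + lam * φ (x, T t) = 0)
    (hA : HasDerivAt A A' t) (hT : HasDerivAt T T' t) (hA_nonneg : 0 ≤ A t)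
    (hAk : A t ^ k = T') (hA' : A' = lam * A t * (T' - 1)) :
    let ψ := fun p : ℝ × ℝ => A p.2 * φ (p.1, T p.2)
    DifferentiableAt ℝ ψ (x, t) ∧
      fderiv ℝ ψ (x, t) (0, 1) + ψ (x, t) ^ k * fderiv ℝ ψ (x, t) (1, 0) + lam * ψ (x, t) = 0 := by
  intro ψ
  have hψ := hasFDerivAt_mul_comp_timeChange hφ hA hT
  refine ⟨hψ.differentiableAt, ?_⟩
  have hψk : ψ (x, t) ^ k = T' * φ (x, T t) ^ k := by
    simp only [ψ]; rw [mul_rpow hA_nonneg hφ_nonneg, hAk]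
  have hφ_t : fderiv ℝ φ (x, T t) (0, T') = T' * fderiv ℝ φ (x, T t) (0, 1) := by
    rw [← smul_eq_mul, ← map_smul, Prod.smul_mk, smul_zero, smul_eq_mul, mul_one]
  rw [hψ.fderiv, hψk]
  simp only [add_apply, smul_apply, ContinuousLinearMap.comp_apply, ContinuousLinearMap.prod_apply,
    ContinuousLinearMap.coe_fst', ContinuousLinearMap.coe_snd', smul_eq_mul, mul_one, hφ_t,
    mul_zero, add_zero, ψ]
  linear_combination (A t * T') * hsol + φ (x, T t) * hA'

end TimeChange

theorem one_sub_mul_exp_pos {a ε t : ℝ} (h : ε < exp (-(a * t))) : 0 < 1 - ε * exp (a * t) := by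
  have : ε * exp (a * t) < exp (-(a * t)) * exp (a * t) := mul_lt_mul_of_pos_right h (exp_pos _)
  rw [← exp_add, neg_add_cancel, exp_zero] at this
  linarith

theorem hasDerivAt_neg_inv_mul_log_exp_sub {a ε t : ℝ} (ha : a ≠ 0) (h : ε < exp (-(a * t))) :
    HasDerivAt (fun s => -(1 / a) * log (exp (-(a * s)) - ε)) (1 - ε * exp (a * t))⁻¹ t := by
  have hinner : HasDerivAt (fun s => exp (-(a * s)) - ε) (exp (-(a * t)) * -a) t :=
    (((hasDerivAt_id t).const_mul a).neg.exp.sub_const ε).congr_deriv (by simp)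
  refine ((hinner.log (sub_pos.mpr h).ne').const_mul (-(1 / a))).congr_deriv ?_
  rw [exp_neg]
  field_simp

theorem hasDerivAt_one_sub_mul_exp_rpow {a ε k t : ℝ} (hc : 0 < 1 - ε * exp (a * t)) :
    HasDerivAt (fun s => (1 - ε * exp (a * s)) ^ (-(1 / k)))
      (a / k * (1 - ε * exp (a * t)) ^ (-(1 / k)) * ((1 - ε * exp (a * t))⁻¹ - 1)) t := by
  have hinner : HasDerivAt (fun s => 1 - ε * exp (a * s)) (-(ε * (exp (a * t) * a))) t :=
    (((hasDerivAt_id t).const_mul a).exp.const_mul ε).const_sub 1 |>.congr_deriv (by simp)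
  refine (hinner.rpow_const (Or.inl hc.ne')).congr_deriv ?_
  rw [rpow_sub hc, rpow_one]
  field_simp
  ring

/-- case m = 1. If φ is a positive differentiable solution of
`u_t + u^k·u_x + λ·u = 0` on ℝ², then
`ψ(x,t) = (1 − ε e^{λkt})^{−1/k}·φ(x, −(1/(λk))·ln(e^{−λkt} − ε))` satisfies
the same equation at every point with `e^{−λkt} > ε`. -/
theorem case7_G7_transformation
    (lam k : ℝ) (hlam : lam ≠ 0) (hk : k ≠ 0) (ε : ℝ)
    (φ : ℝ × ℝ → ℝ)
    (hφ : Differentiable ℝ φ)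
    (hpos : ∀ x t : ℝ, 0 < φ (x, t))
    (hsol : ∀ x t : ℝ,
      fderiv ℝ φ (x, t) (0, 1) + φ (x, t) ^ k * fderiv ℝ φ (x, t) (1, 0)
        + lam * φ (x, t) = 0) :
    ∀ ψ : ℝ × ℝ → ℝ,
      ψ = (fun p : ℝ × ℝ =>
        (1 - ε * exp (lam * k * p.2)) ^ (-(1 / k)) *
          φ (p.1, -(1 / (lam * k)) * Real.log (exp (-(lam * k * p.2)) - ε))) →
      ∀ x t : ℝ,
        ε < exp (-(lam * k * t)) →
        DifferentiableAt ℝ ψ (x, t) ∧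
        fderiv ℝ ψ (x, t) (0, 1) + ψ (x, t) ^ k * fderiv ℝ ψ (x, t) (1, 0)
          + lam * ψ (x, t) = 0 := by
  rintro ψ rfl x t ht
  have hc := one_sub_mul_exp_pos ht
  have hAk : ((1 - ε * exp (lam * k * t)) ^ (-(1 / k))) ^ k = (1 - ε * exp (lam * k * t))⁻¹ := by
    rw [← rpow_mul hc.le, neg_mul, one_div_mul_cancel hk, rpow_neg_one]
  exact dampedBurgers_mul_comp_timeChange (hφ _) (hpos _ _).le (hsol _ _)
    (hasDerivAt_one_sub_mul_exp_rpow hc)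
    (hasDerivAt_neg_inv_mul_log_exp_sub (mul_ne_zero hlam hk) ht)
    (rpow_nonneg hc.le _) hAk (by rw [mul_div_cancel_right₀ lam hk])
end

section
/- Let λ ≠ 0 and A be real constants. The functions u₊(x,t) = (−(λ x t + A) + √((λ x t + A)² + 4 x t))/(2t) and u₋(x,t) = (−(λ x t + A) − √((λ x t + A)² + 4 x t))/(2t) satisfy the equation u_t + u²·u_x + λ·u² = 0 at every point (x,t) with t ≠ 0 and (λ x t + A)² + 4 x t > 0. -/
/-!
Each branch `u = (-(λxt + A) ± √((λxt + A)² + 4xt)) / (2t)` is a root of the quadratic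
`t u² + (λxt + A) u = x`. Differentiating this relation implicitly expresses `u_x` and `u_t`
through `u`, with the common denominator `2tu + λxt + A = ±√(…) ≠ 0`, and then
`(2tu + λxt + A) (u_t + u² u_x + λu²) = λu (t u² + (λxt + A) u - x) = 0`.
-/

open Real Filter Topology Set

theorem burgers_of_implicit_quadratic (lam A : ℝ) {u : ℝ × ℝ → ℝ} {p : ℝ × ℝ}
    (hu : DifferentiableAt ℝ u p)
    (hquad : ∀ᶠ q in 𝓝 p, q.2 * u q ^ 2 + (lam * q.1 * q.2 + A) * u q = q.1)
    (hnd : 2 * p.2 * u p + (lam * p.1 * p.2 + A) ≠ 0) :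
    fderiv ℝ u p (0, 1) + u p ^ 2 * fderiv ℝ u p (1, 0) + lam * u p ^ 2 = 0 := by
  have hF : HasFDerivAt (fun q : ℝ × ℝ => q.2 * u q ^ 2 + (lam * q.1 * q.2 + A) * u q - q.1)
      (0 : ℝ × ℝ →L[ℝ] ℝ) p :=
    (hasFDerivAt_const 0 _).congr_of_eventuallyEq (hquad.mono fun q hq => sub_eq_zero.2 hq)
  have hzero := (((hasFDerivAt_snd.mul (hu.hasFDerivAt.pow 2)).add
    ((((hasFDerivAt_fst.const_mul lam).mul hasFDerivAt_snd).add_const A).mul hu.hasFDerivAt)).sub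
    hasFDerivAt_fst).unique hF
  have hux := congrArg (· (1, 0)) hzero
  have hut := congrArg (· (0, 1)) hzero
  simp only [Nat.add_one_sub_one, pow_one, nsmul_eq_mul, Nat.cast_ofNat, Pi.mul_apply, smul_add,
    sub_apply, add_apply, smul_apply,
    smul_eq_mul, ContinuousLinearMap.coe_snd', ContinuousLinearMap.coe_fst',
    zero_apply, mul_zero, add_zero, mul_one, zero_add, sub_zero] at hux hut
  apply (mul_eq_zero.1 _).resolve_right hnd
  linear_combination hut + u p ^ 2 * hux + lam * u p * hquad.self_of_nhds

theorem root_of_sq_eq_discrim {B s t x : ℝ} (ht : t ≠ 0) (hs : s ^ 2 = B ^ 2 + 4 * x * t) :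
    t * ((-B + s) / (2 * t)) ^ 2 + B * ((-B + s) / (2 * t)) = x := by
  field_simp
  linear_combination hs

noncomputable def quadraticBranch (lam A ε : ℝ) (p : ℝ × ℝ) : ℝ :=
  (-(lam * p.1 * p.2 + A) + ε * √((lam * p.1 * p.2 + A) ^ 2 + 4 * p.1 * p.2)) / (2 * p.2)

theorem quadraticBranch_solves_burgers (lam A : ℝ) {ε : ℝ} (hε : ε ^ 2 = 1) {x t : ℝ}
    (ht : t ≠ 0) (hdisc : 0 < (lam * x * t + A) ^ 2 + 4 * x * t) :
    let u := quadraticBranch lam A ε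
    fderiv ℝ u (x, t) (0, 1) + u (x, t) ^ 2 * fderiv ℝ u (x, t) (1, 0) + lam * u (x, t) ^ 2 = 0 := by
  have hsq {y : ℝ} (hy : 0 ≤ y) : (ε * √y) ^ 2 = y := by
    rw [mul_pow, hε, one_mul, sq_sqrt hy]
  have hne : ε * √((lam * x * t + A) ^ 2 + 4 * x * t) ≠ 0 :=
    mul_ne_zero (by rintro rfl; norm_num at hε) (sqrt_pos.2 hdisc).ne'
  refine burgers_of_implicit_quadratic lam A ?_ ?_ ?_
  · unfold quadraticBranch
    fun_prop (disch := positivity)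
  · filter_upwards [continuous_snd.continuousAt.eventually_ne ht,
      (show Continuous fun q : ℝ × ℝ => (lam * q.1 * q.2 + A) ^ 2 + 4 * q.1 * q.2 by
        fun_prop).continuousAt.eventually (Ioi_mem_nhds hdisc)] with q hq2 hqdisc
    exact root_of_sq_eq_discrim hq2 (hsq hqdisc.le)
  · simp only [quadraticBranch]
    convert hne using 1
    field_simp
    ring

theorem case1_invariant_solution_m_eq_k_eq_two_general
    (lam A : ℝ) :
    ∀ uP uM : ℝ × ℝ → ℝ,
      uP = (fun p : ℝ × ℝ =>
        (-(lam * p.1 * p.2 + A) + Real.sqrt ((lam * p.1 * p.2 + A) ^ 2 + 4 * p.1 * p.2))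
          / (2 * p.2)) →
      uM = (fun p : ℝ × ℝ =>
        (-(lam * p.1 * p.2 + A) - Real.sqrt ((lam * p.1 * p.2 + A) ^ 2 + 4 * p.1 * p.2))
          / (2 * p.2)) →
      ∀ x t : ℝ, t ≠ 0 → 0 < (lam * x * t + A) ^ 2 + 4 * x * t →
        (fderiv ℝ uP (x, t) (0, 1) + uP (x, t) ^ 2 * fderiv ℝ uP (x, t) (1, 0)
          + lam * uP (x, t) ^ 2 = 0) ∧
        (fderiv ℝ uM (x, t) (0, 1) + uM (x, t) ^ 2 * fderiv ℝ uM (x, t) (1, 0)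
          + lam * uM (x, t) ^ 2 = 0) := by
  intro uP uM hP hM x t ht hdisc
  have hP' : uP = quadraticBranch lam A 1 := by
    rw [hP]; funext p; simp only [quadraticBranch, one_mul]
  have hM' : uM = quadraticBranch lam A (-1) := by
    rw [hM]; funext p; simp only [quadraticBranch, neg_one_mul, ← sub_eq_add_neg]
  subst hP' hM'
  exact ⟨quadraticBranch_solves_burgers lam A (by norm_num) ht hdisc,
    quadraticBranch_solves_burgers lam A (by norm_num) ht hdisc⟩

/-- the functions
`u±(x,t) = (−(λxt + A) ± √((λxt + A)² + 4xt))/(2t)` satisfy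
`u_t + u²·u_x + λ·u² = 0` at every point with `t ≠ 0` and
`(λxt + A)² + 4xt > 0`. -/
theorem case1_invariant_solution_m_eq_k_eq_two
    (lam A : ℝ) (hlam : lam ≠ 0) :
    ∀ uP uM : ℝ × ℝ → ℝ,
      uP = (fun p : ℝ × ℝ =>
        (-(lam * p.1 * p.2 + A) + Real.sqrt ((lam * p.1 * p.2 + A) ^ 2 + 4 * p.1 * p.2))
          / (2 * p.2)) →
      uM = (fun p : ℝ × ℝ =>
        (-(lam * p.1 * p.2 + A) - Real.sqrt ((lam * p.1 * p.2 + A) ^ 2 + 4 * p.1 * p.2))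
          / (2 * p.2)) →
      ∀ x t : ℝ, t ≠ 0 → 0 < (lam * x * t + A) ^ 2 + 4 * x * t →
        (fderiv ℝ uP (x, t) (0, 1) + uP (x, t) ^ 2 * fderiv ℝ uP (x, t) (1, 0)
          + lam * uP (x, t) ^ 2 = 0) ∧
        (fderiv ℝ uM (x, t) (0, 1) + uM (x, t) ^ 2 * fderiv ℝ uM (x, t) (1, 0)
          + lam * uM (x, t) ^ 2 = 0) :=
  case1_invariant_solution_m_eq_k_eq_two_general lam A
end

section
/- Let λ ≠ 0, m ≠ 1, and A be real constants. The function u(x,t) = (1/(λ(m−1)t) + A e^{−λ(m−1)x}/t)^{1/(m−1)} satisfies u_t + u^{m−1}·u_x + λ·u^m = 0 at every point (x,t) with t ≠ 0 at which the base 1/(λ(m−1)t) + A e^{−λ(m−1)x}/t is positive. -/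
/-!
The substitution `w = u ^ (m - 1)` turns `u_t + u ^ (m - 1) u_x + λ u ^ m = 0` into the
Riccati–Burgers equation `w_t + w w_x + c w ^ 2 = 0` with `c = λ (m - 1)`, the two left-hand
sides differing by the factor `(1 / (m - 1)) w ^ (1 / (m - 1) - 1)`. For the separated ansatz
`w = B(x) / t` the latter reduces to the linear ODE `B' + c B = 1`, whose solutions are
`B = 1 / c + A e^{-c x}`.
-/

open Real

theorem rpow_solves_of_riccati {lam m : ℝ} (hm : m ≠ 1) {w : ℝ × ℝ → ℝ}
    {w' : ℝ × ℝ →L[ℝ] ℝ} {p : ℝ × ℝ} (hw : HasFDerivAt w w' p) (hpos : 0 < w p)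
    (hriccati : w' (0, 1) + w p * w' (1, 0) + lam * (m - 1) * w p ^ 2 = 0) :
    fderiv ℝ (fun q => w q ^ (1 / (m - 1))) p (0, 1)
        + (w p ^ (1 / (m - 1))) ^ (m - 1) * fderiv ℝ (fun q => w q ^ (1 / (m - 1))) p (1, 0)
        + lam * (w p ^ (1 / (m - 1))) ^ m = 0 := by
  set r := 1 / (m - 1)
  have hr : r * (m - 1) = 1 := one_div_mul_cancel (sub_ne_zero.mpr hm)
  have hpow_sub_one : (w p ^ r) ^ (m - 1) = w p := by
    rw [← rpow_mul hpos.le, hr, rpow_one]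
  have hpow : (w p ^ r) ^ m = w p ^ (r - 1) * w p ^ 2 := by
    rw [← rpow_mul hpos.le, ← rpow_natCast, ← rpow_add hpos]
    congr 1
    linear_combination hr
  rw [(hw.rpow_const (p := r) (Or.inl hpos.ne')).fderiv, hpow_sub_one, hpow]
  simp only [FunLike.coe_smul, Pi.smul_apply, smul_eq_mul]
  linear_combination r * w p ^ (r - 1) * hriccati - lam * w p ^ (r - 1) * w p ^ 2 * hr

theorem hasFDerivAt_div_snd {B : ℝ → ℝ} {B' x t : ℝ} (hB : HasDerivAt B B' x) (ht : t ≠ 0) :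
    HasFDerivAt (fun p : ℝ × ℝ => B p.1 / p.2)
      ((B' / t) • ContinuousLinearMap.fst ℝ ℝ ℝ + (-B x / t ^ 2) • ContinuousLinearMap.snd ℝ ℝ ℝ)
      (x, t) := by
  have h := (hB.comp_hasFDerivAt (x, t) (hasFDerivAt_fst (p := (x, t)) (𝕜 := ℝ))).mul
    ((hasDerivAt_inv ht).comp_hasFDerivAt (x, t) (hasFDerivAt_snd (p := (x, t)) (𝕜 := ℝ)))
  simp only [div_eq_mul_inv]
  refine h.congr_fderiv ?_
  ext <;> simp [mul_comm]

theorem riccati_div_snd_of_linear_ode {c B B' t : ℝ} (ht : t ≠ 0) (hode : B' + c * B = 1) :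
    -B / t ^ 2 + B / t * (B' / t) + c * (B / t) ^ 2 = 0 := by
  field_simp
  linear_combination B * hode

theorem hasDerivAt_inv_add_mul_exp_neg_mul (c A x : ℝ) :
    HasDerivAt (fun y => c⁻¹ + A * exp (-(c * y))) (A * (exp (-(c * x)) * -c)) x :=
  ((((hasDerivAt_id x).const_mul c).neg.exp).const_mul A).const_add c⁻¹ |>.congr_deriv (by simp)

/-- the function
`u(x,t) = (1/(λ(m−1)t) + A e^{−λ(m−1)x}/t)^{1/(m−1)}` satisfies
`u_t + u^{m−1}·u_x + λ·u^m = 0` at every point with `t ≠ 0` at which the base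
`1/(λ(m−1)t) + A e^{−λ(m−1)x}/t` is positive. -/
theorem case2_invariant_solution
    (lam m A : ℝ) (hlam : lam ≠ 0) (hm : m ≠ 1) :
    ∀ u : ℝ × ℝ → ℝ,
      u = (fun p : ℝ × ℝ =>
        (1 / (lam * (m - 1) * p.2)
          + A * exp (-(lam * (m - 1) * p.1)) / p.2) ^ (1 / (m - 1))) →
      ∀ x t : ℝ, t ≠ 0 →
        0 < 1 / (lam * (m - 1) * t) + A * exp (-(lam * (m - 1) * x)) / t →
        fderiv ℝ u (x, t) (0, 1) + u (x, t) ^ (m - 1) * fderiv ℝ u (x, t) (1, 0)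
          + lam * u (x, t) ^ m = 0 := by
  intro u hu x t ht hpos
  set c := lam * (m - 1)
  have hc : c ≠ 0 := mul_ne_zero hlam (sub_ne_zero.mpr hm)
  set B : ℝ → ℝ := fun y => c⁻¹ + A * exp (-(c * y))
  have hbase : ∀ p : ℝ × ℝ, 1 / (c * p.2) + A * exp (-(c * p.1)) / p.2 = B p.1 / p.2 := by
    intro p
    simp only [B, div_eq_mul_inv, one_mul, mul_inv]
    ring
  have hode : A * (exp (-(c * x)) * -c) + c * B x = 1 := by
    simp only [B]
    field_simp
    ring
  obtain rfl : u = fun p => (B p.1 / p.2) ^ (1 / (m - 1)) := hu.trans (funext fun p => by rw [hbase])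
  refine rpow_solves_of_riccati hm (hasFDerivAt_div_snd (hasDerivAt_inv_add_mul_exp_neg_mul c A x) ht)
    (hbase (x, t) ▸ hpos) ?_
  simpa using riccati_div_snd_of_linear_ode ht hode
end

section
/- Let λ ≠ 0, m ≠ 1, and A be real constants. The function u(x,t) = ((A + x)/t − (λ(1−m)/2)·t)^{1/(1−m)} satisfies u_t + u^{1−m}·u_x + λ·u^m = 0 at every point (x,t) with t ≠ 0 at which the base (A + x)/t − (λ(1−m)/2)·t is positive. -/
open Real

/-!
Write `u = g ^ (1/(1-m))`. Since `u ^ (1-m) = g` and `u ^ m = g ^ (1/(1-m) - 1)`, the left-hand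
side equals `g ^ (m/(1-m)) / (1-m) · (g_t + g g_x + λ(1-m))`, so the damped equation for `u` is
equivalent to the forced inviscid Burgers equation `g_t + g g_x = -λ(1-m)` for `g > 0`.
That one is solved by `g = (A + x)/t - (λ(1-m)/2)·t`: here `g_t = -(A + x)/t² - λ(1-m)/2` and
`g g_x = (A + x)/t² - λ(1-m)/2`.
-/

section PartialDerivatives

variable {f : ℝ × ℝ → ℝ} {x t a : ℝ}

theorem fderiv_apply_one_zero_eq (hf : DifferentiableAt ℝ f (x, t))
    (h : HasDerivAt (fun y => f (y, t)) a x) : fderiv ℝ f (x, t) (1, 0) = a := by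
  have hcurve : HasDerivAt (fun y : ℝ => (y, t)) (1, 0) x :=
    (hasDerivAt_id x).prodMk (hasDerivAt_const x t)
  exact (hf.hasFDerivAt.comp_hasDerivAt x hcurve).unique h

theorem fderiv_apply_zero_one_eq (hf : DifferentiableAt ℝ f (x, t))
    (h : HasDerivAt (fun s => f (x, s)) a t) : fderiv ℝ f (x, t) (0, 1) = a := by
  have hcurve : HasDerivAt (fun s : ℝ => (x, s)) (0, 1) t :=
    (hasDerivAt_const t x).prodMk (hasDerivAt_id t)
  exact (hf.hasFDerivAt.comp_hasDerivAt t hcurve).unique h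

end PartialDerivatives

theorem rpow_one_div_one_sub_solves_damped_burgers {g : ℝ × ℝ → ℝ} {p : ℝ × ℝ} {lam m : ℝ}
    (hm : m ≠ 1) (hg : DifferentiableAt ℝ g p) (hpos : 0 < g p)
    (hburgers : fderiv ℝ g p (0, 1) + g p * fderiv ℝ g p (1, 0) + lam * (1 - m) = 0) :
    let u := fun p => g p ^ (1 / (1 - m))
    fderiv ℝ u p (0, 1) + u p ^ (1 - m) * fderiv ℝ u p (1, 0) + lam * u p ^ m = 0 := by
  intro u
  have h1m : 1 - m ≠ 0 := sub_ne_zero.mpr hm.symm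
  have hu : fderiv ℝ u p = (1 / (1 - m) * g p ^ (1 / (1 - m) - 1)) • fderiv ℝ g p :=
    (hg.hasFDerivAt.rpow_const (Or.inl hpos.ne')).fderiv
  have hu_pow_one_sub : u p ^ (1 - m) = g p := by
    rw [← rpow_mul hpos.le, one_div_mul_cancel h1m, rpow_one]
  have hu_pow : u p ^ m = g p ^ (1 / (1 - m) - 1) := by
    rw [← rpow_mul hpos.le]
    congr 1
    field_simp
    ring
  rw [hu_pow_one_sub, hu_pow, hu]
  simp only [smul_apply, smul_eq_mul]
  linear_combination g p ^ (1 / (1 - m) - 1) * (1 / (1 - m) * hburgers - lam * inv_mul_cancel₀ h1m)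

noncomputable def invariantProfile (A c : ℝ) (p : ℝ × ℝ) : ℝ := (A + p.1) / p.2 - c * p.2

theorem invariantProfile_solves_forced_burgers (A c x t : ℝ) (ht : t ≠ 0) :
    DifferentiableAt ℝ (invariantProfile A c) (x, t) ∧
      fderiv ℝ (invariantProfile A c) (x, t) (0, 1)
        + invariantProfile A c (x, t) * fderiv ℝ (invariantProfile A c) (x, t) (1, 0)
        + 2 * c = 0 := by
  have hg : DifferentiableAt ℝ (invariantProfile A c) (x, t) := by
    unfold invariantProfile
    fun_prop (disch := assumption)
  have hgx : HasDerivAt (fun y => invariantProfile A c (y, t)) (1 / t) x :=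
    (((hasDerivAt_id x).const_add A).div_const t).sub_const (c * t)
  have hgt : HasDerivAt (fun s => invariantProfile A c (x, s)) (-(A + x) / t ^ 2 - c) t := by
    have h := ((hasDerivAt_inv ht).const_mul (A + x)).sub ((hasDerivAt_id t).const_mul c)
    exact h.congr_deriv (by ring)
  refine ⟨hg, ?_⟩
  rw [fderiv_apply_zero_one_eq hg hgt, fderiv_apply_one_zero_eq hg hgx, invariantProfile]
  field_simp
  ring

theorem case3_invariant_solution_general
    (lam m A : ℝ) (hm : m ≠ 1) :
    ∀ u : ℝ × ℝ → ℝ,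
      u = (fun p : ℝ × ℝ =>
        ((A + p.1) / p.2 - (lam * (1 - m) / 2) * p.2) ^ (1 / (1 - m))) →
      ∀ x t : ℝ, t ≠ 0 →
        0 < (A + x) / t - (lam * (1 - m) / 2) * t →
        fderiv ℝ u (x, t) (0, 1) + u (x, t) ^ (1 - m) * fderiv ℝ u (x, t) (1, 0)
          + lam * u (x, t) ^ m = 0 := by
  rintro u rfl x t ht hpos
  obtain ⟨hg, hburgers⟩ := invariantProfile_solves_forced_burgers A (lam * (1 - m) / 2) x t ht
  exact rpow_one_div_one_sub_solves_damped_burgers (g := invariantProfile A (lam * (1 - m) / 2))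
    hm hg hpos (by linear_combination hburgers)

/-- the function
`u(x,t) = ((A + x)/t − (λ(1−m)/2)·t)^{1/(1−m)}` satisfies
`u_t + u^{1−m}·u_x + λ·u^m = 0` at every point with `t ≠ 0` at which the base
`(A + x)/t − (λ(1−m)/2)·t` is positive. -/
theorem case3_invariant_solution
    (lam m A : ℝ) (hlam : lam ≠ 0) (hm : m ≠ 1) :
    ∀ u : ℝ × ℝ → ℝ,
      u = (fun p : ℝ × ℝ =>
        ((A + p.1) / p.2 - (lam * (1 - m) / 2) * p.2) ^ (1 / (1 - m))) →
      ∀ x t : ℝ, t ≠ 0 →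
        0 < (A + x) / t - (lam * (1 - m) / 2) * t →
        fderiv ℝ u (x, t) (0, 1) + u (x, t) ^ (1 - m) * fderiv ℝ u (x, t) (1, 0)
          + lam * u (x, t) ^ m = 0 :=
  case3_invariant_solution_general lam m A hm
end

section
/- Let λ ≠ 0, m ≠ 1 be real constants and set c = λ(m−1) + 1. The functions u₊(x,t) = (c t + √(c t² − 2x))^{1/(1−m)} and u₋(x,t) = (c t − √(c t² − 2x))^{1/(1−m)} satisfy u_t + u^{1−m}·u_x + λ·u^m = 0 at every point (x,t) at which c t² − 2x > 0 and the respective base c t ± √(c t² − 2x) is positive. -/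
open Real

/-!
The substitution `u = b ^ (1 / (1 - m))` gives `u ^ (1 - m) = b` and `u ^ m = b ^ (1 / (1 - m) - 1)`,
so the damped equation for `u` becomes `b_t + b b_x = λ (m - 1) = c - 1` for `b` wherever `b > 0`.
For `b = c t ± s` with `s = √(c t² - 2x)` one has `b_t = c ± c t / s` and `b_x = ∓ 1 / s`,
hence `b b_x = ∓ c t / s - 1` and `b_t + b b_x = c - 1`.
-/

theorem rpow_one_div_one_sub_solves_damped_burgers_s16 {E : Type*} [NormedAddCommGroup E]
    [NormedSpace ℝ E] {b : E → ℝ} {b' : E →L[ℝ] ℝ} {p v w : E} {lam m : ℝ} (hm : m ≠ 1)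
    (hb : HasFDerivAt b b' p) (hpos : 0 < b p) (hburgers : b' v + b p * b' w = lam * (m - 1)) :
    fderiv ℝ (fun q => b q ^ (1 / (1 - m))) p v
      + (b p ^ (1 / (1 - m))) ^ (1 - m) * fderiv ℝ (fun q => b q ^ (1 / (1 - m))) p w
      + lam * (b p ^ (1 / (1 - m))) ^ m = 0 := by
  have h1m : 1 - m ≠ 0 := sub_ne_zero.2 hm.symm
  rw [(hb.rpow_const (p := 1 / (1 - m)) (Or.inl hpos.ne')).fderiv]
  have hpow_one_sub : (b p ^ (1 / (1 - m))) ^ (1 - m) = b p := by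
    rw [← rpow_mul hpos.le, one_div_mul_cancel h1m, rpow_one]
  have hpow : (b p ^ (1 / (1 - m))) ^ m = b p ^ (1 / (1 - m) - 1) := by
    rw [← rpow_mul hpos.le]
    congr 1
    field_simp
    ring
  simp only [smul_apply, smul_eq_mul, hpow_one_sub, hpow]
  calc _ = b p ^ (1 / (1 - m) - 1) * (1 / (1 - m)) * (b' v + b p * b' w - lam * (m - 1)) := by
        field_simp
        ring
    _ = 0 := by rw [hburgers, sub_self, mul_zero]

theorem add_mul_sqrt_solves_forced_burgers (c ε x t : ℝ) (hε : ε ^ 2 = 1)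
    (hs : 0 < c * t ^ 2 - 2 * x) :
    ∃ b' : ℝ × ℝ →L[ℝ] ℝ,
      HasFDerivAt (fun q : ℝ × ℝ => c * q.2 + ε * √(c * q.2 ^ 2 - 2 * q.1)) b' (x, t) ∧
      b' (0, 1) + (c * t + ε * √(c * t ^ 2 - 2 * x)) * b' (1, 0) = c - 1 := by
  have hdisc := (((hasFDerivAt_snd (𝕜 := ℝ) (E := ℝ) (p := (x, t))).pow 2).const_mul c).sub
    (hasFDerivAt_fst.const_mul 2)
  refine ⟨_, (hasFDerivAt_snd.const_mul c).add ((hdisc.sqrt hs.ne').const_mul ε), ?_⟩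
  have hS : √(c * t ^ 2 - 2 * x) ≠ 0 := (sqrt_pos.2 hs).ne'
  simp only [Pi.sub_apply, Nat.add_one_sub_one, pow_one, nsmul_eq_mul, Nat.cast_ofNat, add_apply,
    smul_apply, ContinuousLinearMap.coe_snd', ContinuousLinearMap.coe_fst', smul_eq_mul, sub_apply]
  field_simp
  linear_combination (-√(c * t ^ 2 - 2 * x)) * hε

theorem case3_combined_invariant_solution_general
    (lam m : ℝ) (hm : m ≠ 1) (c : ℝ)
    (hc : c = lam * (m - 1) + 1) :
    ∀ uP uM : ℝ × ℝ → ℝ,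
      uP = (fun p : ℝ × ℝ =>
        (c * p.2 + Real.sqrt (c * p.2 ^ 2 - 2 * p.1)) ^ (1 / (1 - m))) →
      uM = (fun p : ℝ × ℝ =>
        (c * p.2 - Real.sqrt (c * p.2 ^ 2 - 2 * p.1)) ^ (1 / (1 - m))) →
      ∀ x t : ℝ, 0 < c * t ^ 2 - 2 * x →
        (0 < c * t + Real.sqrt (c * t ^ 2 - 2 * x) →
          fderiv ℝ uP (x, t) (0, 1)
            + uP (x, t) ^ (1 - m) * fderiv ℝ uP (x, t) (1, 0)
            + lam * uP (x, t) ^ m = 0) ∧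
        (0 < c * t - Real.sqrt (c * t ^ 2 - 2 * x) →
          fderiv ℝ uM (x, t) (0, 1)
            + uM (x, t) ^ (1 - m) * fderiv ℝ uM (x, t) (1, 0)
            + lam * uM (x, t) ^ m = 0) := by
  rintro uP uM rfl rfl x t hs
  have hc' : c - 1 = lam * (m - 1) := by rw [hc]; ring
  constructor
  · intro hpos
    obtain ⟨b', hb, hburgers⟩ := add_mul_sqrt_solves_forced_burgers c 1 x t (one_pow 2) hs
    simp only [one_mul] at hb hburgers
    exact rpow_one_div_one_sub_solves_damped_burgers_s16 hm hb hpos (hburgers.trans hc')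
  · intro hpos
    obtain ⟨b', hb, hburgers⟩ :=
      add_mul_sqrt_solves_forced_burgers c (-1) x t (by norm_num) hs
    simp only [neg_one_mul, ← sub_eq_add_neg] at hb hburgers
    exact rpow_one_div_one_sub_solves_damped_burgers_s16 hm hb hpos (hburgers.trans hc')

/-- with c = λ(m−1) + 1, the functions
`u±(x,t) = (c t ± √(c t² − 2x))^{1/(1−m)}` satisfy
`u_t + u^{1−m}·u_x + λ·u^m = 0` at every point at which `c t² − 2x > 0` and
the respective base `c t ± √(c t² − 2x)` is positive. -/
theorem case3_combined_invariant_solution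
    (lam m : ℝ) (hlam : lam ≠ 0) (hm : m ≠ 1) (c : ℝ)
    (hc : c = lam * (m - 1) + 1) :
    ∀ uP uM : ℝ × ℝ → ℝ,
      uP = (fun p : ℝ × ℝ =>
        (c * p.2 + Real.sqrt (c * p.2 ^ 2 - 2 * p.1)) ^ (1 / (1 - m))) →
      uM = (fun p : ℝ × ℝ =>
        (c * p.2 - Real.sqrt (c * p.2 ^ 2 - 2 * p.1)) ^ (1 / (1 - m))) →
      ∀ x t : ℝ, 0 < c * t ^ 2 - 2 * x →
        (0 < c * t + Real.sqrt (c * t ^ 2 - 2 * x) →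
          fderiv ℝ uP (x, t) (0, 1)
            + uP (x, t) ^ (1 - m) * fderiv ℝ uP (x, t) (1, 0)
            + lam * uP (x, t) ^ m = 0) ∧
        (0 < c * t - Real.sqrt (c * t ^ 2 - 2 * x) →
          fderiv ℝ uM (x, t) (0, 1)
            + uM (x, t) ^ (1 - m) * fderiv ℝ uM (x, t) (1, 0)
            + lam * uM (x, t) ^ m = 0) :=
  case3_combined_invariant_solution_general lam m hm c hc
end

section
/- Let λ ≠ 0, m ≠ 1 be real constants. The function u(x,t) = (t/x + (λ(m−1)/4)·x)^{−2/(m−1)} satisfies u_t + u^{(m−1)/2}·u_x + λ·u^m = 0 at every point (x,t) with x ≠ 0 at which the base t/x + (λ(m−1)/4)·x is positive. -/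
open Real

/-! Write `u = G ^ e` with `G = t / x + c * x`, `c = λ (m - 1) / 4` and `e = -2 / (m - 1)`.
Since `e * (m - 1) / 2 = -1` we have `u ^ ((m - 1) / 2) = G⁻¹`, so
`u_t + u ^ ((m - 1) / 2) * u_x = e * G ^ (e - 2) * (G * G_t + G_x)`. For this base
`G * G_t + G_x = 2 * c`, and `e - 2 = e * m`, so the left side is `2 c e * u ^ m = -λ * u ^ m`. -/

theorem fderiv_rpow_transport {G : ℝ × ℝ → ℝ} {G' : ℝ × ℝ →L[ℝ] ℝ} {p : ℝ × ℝ}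
    (hG : HasFDerivAt G G' p) (hpos : 0 < G p) {e k : ℝ}
    (hek : e * k = -1) :
    fderiv ℝ (fun q => G q ^ e) p (0, 1)
        + (G p ^ e) ^ k * fderiv ℝ (fun q => G q ^ e) p (1, 0)
      = e * G p ^ (e - 2) * (G p * G' (0, 1) + G' (1, 0)) := by
  have hpow_k : (G p ^ e) ^ k = (G p)⁻¹ := by
    rw [← rpow_mul hpos.le, hek, rpow_neg_one]
  have hpow_sub : G p ^ (e - 1) = G p ^ (e - 2) * G p := by
    rw [← rpow_add_one hpos.ne']
    ring_nf
  rw [(hG.rpow_const (Or.inl hpos.ne')).fderiv, hpow_k]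
  simp only [smul_apply, smul_eq_mul, hpow_sub]
  field_simp

theorem hasFDerivAt_div_fst_add_mul_fst (c : ℝ) {x t : ℝ} (hx : x ≠ 0) :
    HasFDerivAt (fun p : ℝ × ℝ => p.2 / p.1 + c * p.1)
      (x⁻¹ • ContinuousLinearMap.snd ℝ ℝ ℝ + (c - t / x ^ 2) • ContinuousLinearMap.fst ℝ ℝ ℝ)
      (x, t) := by
  have hinv := (hasFDerivAt_inv hx).comp (x, t) (hasFDerivAt_fst (𝕜 := ℝ) (p := (x, t)))
  have h := (hasFDerivAt_snd.mul hinv).add ((hasFDerivAt_fst (p := ((x, t) : ℝ × ℝ))).const_mul c)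
  simp only [Function.comp_def, Pi.mul_def, Pi.add_def, ← div_eq_mul_inv] at h
  refine h.congr_fderiv ?_
  ext <;> simp
  ring

theorem div_add_mul_mul_inv_add_sub (c : ℝ) {x : ℝ} (t : ℝ) (hx : x ≠ 0) :
    (t / x + c * x) * x⁻¹ + (c - t / x ^ 2) = 2 * c := by
  field_simp
  ring

theorem case4_invariant_solution_general
    (lam m : ℝ) (hm : m ≠ 1) :
    ∀ u : ℝ × ℝ → ℝ,
      u = (fun p : ℝ × ℝ =>
        (p.2 / p.1 + (lam * (m - 1) / 4) * p.1) ^ (-(2 / (m - 1)))) →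
      ∀ x t : ℝ, x ≠ 0 →
        0 < t / x + (lam * (m - 1) / 4) * x →
        fderiv ℝ u (x, t) (0, 1)
          + u (x, t) ^ ((m - 1) / 2) * fderiv ℝ u (x, t) (1, 0)
          + lam * u (x, t) ^ m = 0 := by
  rintro u rfl x t hx hpos
  have hm1 : m - 1 ≠ 0 := sub_ne_zero.mpr hm
  rw [fderiv_rpow_transport (hasFDerivAt_div_fst_add_mul_fst _ hx) hpos (by field_simp)]
  simp only [add_apply, smul_apply, ContinuousLinearMap.coe_fst',
    ContinuousLinearMap.coe_snd', smul_eq_mul, mul_zero, mul_one, add_zero, zero_add]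
  rw [div_add_mul_mul_inv_add_sub _ _ hx, ← rpow_mul hpos.le]
  have hexp : -(2 / (m - 1)) * m = -(2 / (m - 1)) - 2 := by field_simp; ring
  rw [hexp]
  field_simp
  ring

/-- the function
`u(x,t) = (t/x + (λ(m−1)/4)·x)^{−2/(m−1)}` satisfies
`u_t + u^{(m−1)/2}·u_x + λ·u^m = 0` at every point with `x ≠ 0` at which the
base `t/x + (λ(m−1)/4)·x` is positive. -/
theorem case4_invariant_solution
    (lam m : ℝ) (hlam : lam ≠ 0) (hm : m ≠ 1) :
    ∀ u : ℝ × ℝ → ℝ,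
      u = (fun p : ℝ × ℝ =>
        (p.2 / p.1 + (lam * (m - 1) / 4) * p.1) ^ (-(2 / (m - 1)))) →
      ∀ x t : ℝ, x ≠ 0 →
        0 < t / x + (lam * (m - 1) / 4) * x →
        fderiv ℝ u (x, t) (0, 1)
          + u (x, t) ^ ((m - 1) / 2) * fderiv ℝ u (x, t) (1, 0)
          + lam * u (x, t) ^ m = 0 :=
  case4_invariant_solution_general lam m hm
end

section
/- Let λ ≠ 0, k ≠ 0, and ε be real constants. The function u(x,t) = (−λ² k² ε x e^{−λ k t}/(1 + λ ε k e^{−λ k t}))^{1/k} satisfies u_t + u^k·u_x + λ·u = 0 at every point (x,t) at which 1 + λ ε k e^{−λ k t} ≠ 0 and the base −λ² k² ε x e^{−λ k t}/(1 + λ ε k e^{−λ k t}) is positive. -/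
open Real

/-!
Writing `u = B ^ (1/k)` turns `u_t + u^k u_x + λ u` into `(1/k) B^(1/k - 1) (B_t + B B_x + λk B)`,
so it suffices that `B` solves the damped Burgers equation `B_t + B B_x + λk B = 0`.
Here `B = x g(t)` with `g = -λk · λεk e^{-λkt} / (1 + λεk e^{-λkt})`, and such a separable `B` is a
solution exactly when `g` solves the Riccati equation `g' = -g² - λk g`, which `1/g` linearises.
-/

/-- `u_t + u^k u_x + λ u = 0` at `p`, with `x` the first and `t` the second coordinate. -/
def SatisfiesDampedBurgersAt (k lam : ℝ) (u : ℝ × ℝ → ℝ) (p : ℝ × ℝ) : Prop :=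
  fderiv ℝ u p (0, 1) + u p ^ k * fderiv ℝ u p (1, 0) + lam * u p = 0

theorem SatisfiesDampedBurgersAt.rpow_inv {k lam : ℝ} {B : ℝ × ℝ → ℝ} {p : ℝ × ℝ}
    (hk : k ≠ 0) (hB : DifferentiableAt ℝ B p) (hpos : 0 < B p)
    (hsol : SatisfiesDampedBurgersAt 1 (lam * k) B p) :
    SatisfiesDampedBurgersAt k lam (fun q => B q ^ (1 / k)) p := by
  unfold SatisfiesDampedBurgersAt at *
  rw [(hB.hasFDerivAt.rpow_const (p := 1 / k) (Or.inl hpos.ne')).fderiv]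
  simp only [smul_apply, smul_eq_mul]
  have hpow_k : (B p ^ (1 / k)) ^ k = B p := by
    rw [← rpow_mul hpos.le, one_div_mul_cancel hk, rpow_one]
  have hpow_pred : B p ^ (1 / k) = B p ^ (1 / k - 1) * B p := by
    rw [rpow_sub hpos, rpow_one, div_mul_cancel₀ _ hpos.ne']
  have hk_cancel : 1 / k * k = 1 := one_div_mul_cancel hk
  rw [hpow_k, hpow_pred]
  rw [rpow_one] at hsol
  linear_combination
    (1 / k * B p ^ (1 / k - 1)) * hsol - (lam * B p ^ (1 / k - 1) * B p) * hk_cancel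

theorem satisfiesDampedBurgersAt_fst_mul {mu x t g' : ℝ} {g : ℝ → ℝ} (hg : HasDerivAt g g' t)
    (hriccati : g' = -g t ^ 2 - mu * g t) :
    SatisfiesDampedBurgersAt 1 mu (fun p => p.1 * g p.2) (x, t) := by
  have hB : HasFDerivAt (fun p : ℝ × ℝ => p.1 * g p.2)
      (x • (g' • ContinuousLinearMap.snd ℝ ℝ ℝ) + g t • ContinuousLinearMap.fst ℝ ℝ ℝ) (x, t) :=
    hasFDerivAt_fst.fun_mul (hg.comp_hasFDerivAt (x, t) hasFDerivAt_snd)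
  unfold SatisfiesDampedBurgersAt
  rw [hB.fderiv]
  simp only [add_apply, smul_apply,
    ContinuousLinearMap.coe_fst', ContinuousLinearMap.coe_snd', smul_eq_mul, rpow_one]
  linear_combination x * hriccati

/-- The solution of `g' = -g² - μ g` with `1/g = -(e^{μt}/c + 1)/μ`. -/
noncomputable def riccatiSolution (mu c t : ℝ) : ℝ :=
  -(mu * c * exp (-(mu * t))) / (1 + c * exp (-(mu * t)))

theorem hasDerivAt_riccatiSolution {mu c t : ℝ} (hden : 1 + c * exp (-(mu * t)) ≠ 0) :
    HasDerivAt (riccatiSolution mu c)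
      (-riccatiSolution mu c t ^ 2 - mu * riccatiSolution mu c t) t := by
  have hexp : HasDerivAt (fun s => exp (-(mu * s))) (exp (-(mu * t)) * -mu) t := by
    simpa using ((hasDerivAt_id t).const_mul mu).neg.exp
  have hquot := (hexp.const_mul (mu * c)).fun_neg.fun_div ((hexp.const_mul c).const_add 1) hden
  refine hquot.congr_deriv ?_
  unfold riccatiSolution
  field_simp
  ring

theorem case7_G8_invariant_solution_general
    (lam k ε : ℝ) (hk : k ≠ 0) :
    ∀ u : ℝ × ℝ → ℝ,
      u = (fun p : ℝ × ℝ =>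
        (-(lam ^ 2 * k ^ 2 * ε * p.1 * exp (-(lam * k * p.2)))
          / (1 + lam * ε * k * exp (-(lam * k * p.2)))) ^ (1 / k)) →
      ∀ x t : ℝ,
        1 + lam * ε * k * exp (-(lam * k * t)) ≠ 0 →
        0 < -(lam ^ 2 * k ^ 2 * ε * x * exp (-(lam * k * t)))
              / (1 + lam * ε * k * exp (-(lam * k * t))) →
        fderiv ℝ u (x, t) (0, 1) + u (x, t) ^ k * fderiv ℝ u (x, t) (1, 0)
          + lam * u (x, t) = 0 := by
  rintro u rfl x t hden hpos
  have hB_eq : ∀ x t : ℝ, -(lam ^ 2 * k ^ 2 * ε * x * exp (-(lam * k * t)))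
      / (1 + lam * ε * k * exp (-(lam * k * t))) = x * riccatiSolution (lam * k) (lam * ε * k) t :=
    fun x t => by
      unfold riccatiSolution
      ring
  have hg := hasDerivAt_riccatiSolution (mu := lam * k) hden
  simp only [hB_eq] at hpos ⊢
  exact SatisfiesDampedBurgersAt.rpow_inv
    (B := fun p => p.1 * riccatiSolution (lam * k) (lam * ε * k) p.2) hk
    (differentiableAt_fst.fun_mul (hg.differentiableAt.fun_comp' (x, t) differentiableAt_snd)) hpos
    (satisfiesDampedBurgersAt_fst_mul hg rfl)

/-- the function
`u(x,t) = (−λ²k²ε x e^{−λkt}/(1 + λεk e^{−λkt}))^{1/k}` satisfies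
`u_t + u^k·u_x + λ·u = 0` at every point at which `1 + λεk e^{−λkt} ≠ 0` and
the base `−λ²k²ε x e^{−λkt}/(1 + λεk e^{−λkt})` is positive. -/
theorem case7_G8_invariant_solution
    (lam k ε : ℝ) (hlam : lam ≠ 0) (hk : k ≠ 0) :
    ∀ u : ℝ × ℝ → ℝ,
      u = (fun p : ℝ × ℝ =>
        (-(lam ^ 2 * k ^ 2 * ε * p.1 * exp (-(lam * k * p.2)))
          / (1 + lam * ε * k * exp (-(lam * k * p.2)))) ^ (1 / k)) →
      ∀ x t : ℝ,
        1 + lam * ε * k * exp (-(lam * k * t)) ≠ 0 →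
        0 < -(lam ^ 2 * k ^ 2 * ε * x * exp (-(lam * k * t)))
              / (1 + lam * ε * k * exp (-(lam * k * t))) →
        fderiv ℝ u (x, t) (0, 1) + u (x, t) ^ k * fderiv ℝ u (x, t) (1, 0)
          + lam * u (x, t) = 0 :=
  case7_G8_invariant_solution_general lam k ε hk
end
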